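/- Let G=(V,E) be a finite connected graph with m edges, let w_{0,e}>0 be initial weights, and fix a step size s with 0<s<1/(2m+2). Define iterates by w_e^{(0)}=w_{0,e} and w_e^{(j+1)} = w_e^{(j)} + s·(−κ_e^{(j)} + (∑_{τ∈E} κ_τ^{(j)}·ρ_τ^{(j)})/(∑_{τ∈E} w_τ^{(j)}))·ρ_e^{(j)}, where ρ_e^{(j)} and κ_e^{(j)} denote the distance and Lin–Lu–Yau's Ricci curvature of the edge e computed from the weights w^{(j)} (the defining limits are assumed to exist at every step, and the curvature satisfies the bounds −(2/ρ_e)·max_{τ∈E} w_τ ≤ κ_e ≤ 2). Then every iterate is strictly positive (so the flow has a unique global solution) and for all j∈ℕ and all e∈E: (1−2(m+1)s)^j·w_{0,e} ≤ w_e^{(j)} ≤ (1+2(m+1)s)^j·∑_{τ∈E} w_{0,τ}. -/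

import Mathlib

open Finset

section RicciDefs

variable {V : Type*}

/-- The sum of the weights of the edges of a walk. -/
noncomputable def walkWeight {G : SimpleGraph V} (w : Sym2 V → ℝ) {u v : V} (p : G.Walk u v) : ℝ :=
  (p.edges.map w).sum

/-- The weighted graph distance: infimum of total weight over walks joining `u` and `v`. -/
noncomputable def gdist (G : SimpleGraph V) (w : Sym2 V → ℝ) (u v : V) : ℝ :=
  sInf {x : ℝ | ∃ p : G.Walk u v, x = walkWeight w p}

/-- A choice of ordered endpoints of an unordered pair. -/
noncomputable def endpoints (e : Sym2 V) : V × V := Quot.out e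

/-- The weighted distance between the endpoints of an edge. -/
noncomputable def edist (G : SimpleGraph V) (w : Sym2 V → ℝ) (e : Sym2 V) : ℝ :=
  gdist G w (endpoints e).1 (endpoints e).2

/-- The `α`-lazy one-step random walk at `x`. -/
noncomputable def lazyWalk (G : SimpleGraph V) [Fintype V] [DecidableEq V] [DecidableRel G.Adj]
    (w : Sym2 V → ℝ) (α : ℝ) (x : V) : V → ℝ := fun z =>
  if z = x then α
  else if G.Adj x z then (1 - α) * w s(x, z) / ∑ u ∈ G.neighborFinset x, w s(x, u)
  else 0

/-- A probability measure on a finite vertex set. -/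
def IsProbMeasure [Fintype V] (μ : V → ℝ) : Prop :=
  (∀ x, 0 ≤ μ x) ∧ ∑ x, μ x = 1

/-- A coupling between two probability measures. -/
def IsCoupling [Fintype V] (μ₁ μ₂ : V → ℝ) (A : V → V → ℝ) : Prop :=
  (∀ u v, A u v ∈ Set.Icc (0 : ℝ) 1) ∧ (∀ u, ∑ x, A u x = μ₁ u) ∧ (∀ v, ∑ y, A y v = μ₂ v)

/-- The Wasserstein distance between two probability measures. -/
noncomputable def wasserstein [Fintype V] (G : SimpleGraph V) (w : Sym2 V → ℝ)
    (μ₁ μ₂ : V → ℝ) : ℝ :=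
  sInf {x : ℝ | ∃ A : V → V → ℝ, IsCoupling μ₁ μ₂ A ∧ x = ∑ u, ∑ v, A u v * gdist G w u v}

/-- Ollivier's `α`-Ricci curvature of an edge. -/
noncomputable def ollivier [Fintype V] [DecidableEq V] (G : SimpleGraph V) [DecidableRel G.Adj]
    (w : Sym2 V → ℝ) (α : ℝ) (e : Sym2 V) : ℝ :=
  1 - wasserstein G w (lazyWalk G w α (endpoints e).1) (lazyWalk G w α (endpoints e).2)
        / edist G w e

end RicciDefs

/-!
While the weights are positive, `0 < ρ_e ≤ w_e`, so the curvature bounds become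
`-2 max_τ w_τ ≤ κ_e ρ_e ≤ 2 w_e`; summing, the normalizing term `∑ κ_τ ρ_τ / ∑ w_τ` lies in
`[-2m, 2]`. Hence one step multiplies every weight by at least `1 - 2(m+1)s > 0` and, since
`max_τ w_τ ≤ ∑ w_τ`, the total weight by at most `1 + 2(m+1)s`. Induction on `j` then gives
positivity and both bounds.
-/

section WeightedDistance

variable {V : Type*} {G : SimpleGraph V} {w : Sym2 V → ℝ}

lemma walkWeight_nonneg (hw : ∀ e ∈ G.edgeSet, 0 ≤ w e) {u v : V} (p : G.Walk u v) :
    0 ≤ walkWeight w p :=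
  List.sum_nonneg fun _ hx => by
    obtain ⟨e, he, rfl⟩ := List.mem_map.mp hx
    exact hw e (p.edges_subset_edgeSet he)

lemma le_walkWeight_of_mem_edges (hw : ∀ e ∈ G.edgeSet, 0 ≤ w e) {u v : V} {p : G.Walk u v}
    {e : Sym2 V} (he : e ∈ p.edges) : w e ≤ walkWeight w p :=
  List.single_le_sum (fun _ hx => by
    obtain ⟨τ, hτ, rfl⟩ := List.mem_map.mp hx
    exact hw τ (p.edges_subset_edgeSet hτ)) _ (List.mem_map_of_mem he)

lemma gdist_le_walkWeight (hw : ∀ e ∈ G.edgeSet, 0 ≤ w e) {u v : V} (p : G.Walk u v) :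
    gdist G w u v ≤ walkWeight w p :=
  csInf_le ⟨0, by rintro _ ⟨q, rfl⟩; exact walkWeight_nonneg hw q⟩ ⟨p, rfl⟩

/-- Every walk between distinct vertices uses an edge, so its weight is at least the smallest
edge weight. -/
lemma gdist_pos [Fintype G.edgeSet] (hw : ∀ e ∈ G.edgeFinset, 0 < w e) {u v : V}
    (huv : u ≠ v) (hreach : G.Reachable u v) : 0 < gdist G w u v := by
  have hw' : ∀ e ∈ G.edgeSet, 0 ≤ w e := fun e he =>
    (hw e (SimpleGraph.mem_edgeFinset.mpr he)).le
  obtain ⟨p⟩ := hreach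
  have hE : G.edgeFinset.Nonempty := by
    cases p with
    | nil => exact absurd rfl huv
    | cons h _ => exact ⟨_, SimpleGraph.mem_edgeFinset.mpr (G.mem_edgeSet.mpr h)⟩
  obtain ⟨τ, hτ, hmin⟩ := G.edgeFinset.exists_mem_eq_inf' hE w
  refine (hmin ▸ hw τ hτ).trans_le (le_csInf ⟨_, p, rfl⟩ ?_)
  rintro _ ⟨q, rfl⟩
  cases q with
  | nil => exact absurd rfl huv
  | cons h q =>
    exact (G.edgeFinset.inf'_le w (SimpleGraph.mem_edgeFinset.mpr (G.mem_edgeSet.mpr h))).trans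
      (le_walkWeight_of_mem_edges hw' (q.edges_cons h ▸ List.mem_cons_self))

lemma adj_endpoints {e : Sym2 V} (he : e ∈ G.edgeSet) :
    G.Adj (endpoints e).1 (endpoints e).2 := by
  rwa [← Quot.out_eq e] at he

lemma edist_le_weight (hw : ∀ e ∈ G.edgeSet, 0 ≤ w e) {e : Sym2 V} (he : e ∈ G.edgeSet) :
    edist G w e ≤ w e := by
  have hp := gdist_le_walkWeight hw (adj_endpoints he).toWalk
  have hmk : s((endpoints e).1, (endpoints e).2) = e := Quot.out_eq e
  rwa [walkWeight, SimpleGraph.Adj.edges_toWalk, List.map_singleton, List.sum_singleton,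
    hmk] at hp

lemma edist_pos_of_weight_pos [Fintype G.edgeSet] (hw : ∀ e ∈ G.edgeFinset, 0 < w e)
    {e : Sym2 V} (he : e ∈ G.edgeSet) : 0 < edist G w e :=
  gdist_pos hw (adj_endpoints he).ne (adj_endpoints he).reachable

end WeightedDistance

/-- One step `w^(j) ↦ w^(j+1)` of the quasi-normalized flow on the edge set `E`, where `ρ` and
`κ` stand for the distances and curvatures computed from `w`. -/
noncomputable def quasiNormalizedStep {ι : Type*} (E : Finset ι) (s : ℝ) (w ρ κ : ι → ℝ)
    (e : ι) : ℝ :=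
  w e + s * (-(κ e) + (∑ τ ∈ E, κ τ * ρ τ) / (∑ τ ∈ E, w τ)) * ρ e

section QuasiNormalizedStep

variable {ι : Type*} {E : Finset ι} {w ρ κ : ι → ℝ}

lemma curvature_mul_dist_mem (hρ : ∀ e ∈ E, 0 < ρ e ∧ ρ e ≤ w e)
    (hκ : ∀ e (he : e ∈ E), -(2 / ρ e) * E.sup' ⟨e, he⟩ w ≤ κ e ∧ κ e ≤ 2)
    {e : ι} (he : e ∈ E) :
    -(2 * E.sup' ⟨e, he⟩ w) ≤ κ e * ρ e ∧ κ e * ρ e ≤ 2 * w e := by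
  obtain ⟨hρ0, hρw⟩ := hρ e he
  obtain ⟨hlo, hhi⟩ := hκ e he
  constructor
  · have := mul_le_mul_of_nonneg_right hlo hρ0.le
    rwa [show -(2 / ρ e) * E.sup' ⟨e, he⟩ w * ρ e = -(2 * E.sup' ⟨e, he⟩ w) by
      field_simp] at this
  · nlinarith

lemma totalCurvature_div_mem (hE : E.Nonempty) (hw : ∀ e ∈ E, 0 < w e)
    (hρ : ∀ e ∈ E, 0 < ρ e ∧ ρ e ≤ w e)
    (hκ : ∀ e (he : e ∈ E), -(2 / ρ e) * E.sup' ⟨e, he⟩ w ≤ κ e ∧ κ e ≤ 2) :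
    -(2 * (#E : ℝ)) ≤ (∑ τ ∈ E, κ τ * ρ τ) / ∑ τ ∈ E, w τ ∧
      (∑ τ ∈ E, κ τ * ρ τ) / ∑ τ ∈ E, w τ ≤ 2 := by
  have hS : 0 < ∑ τ ∈ E, w τ := sum_pos hw hE
  have hMS : E.sup' hE w ≤ ∑ τ ∈ E, w τ :=
    sup'_le hE _ fun e he => single_le_sum (fun τ hτ => (hw τ hτ).le) he
  have hlo : ∑ _τ ∈ E, -(2 * E.sup' hE w) ≤ ∑ τ ∈ E, κ τ * ρ τ :=
    sum_le_sum fun τ hτ => (curvature_mul_dist_mem hρ hκ hτ).1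
  have hhi : ∑ τ ∈ E, κ τ * ρ τ ≤ ∑ τ ∈ E, 2 * w τ :=
    sum_le_sum fun τ hτ => (curvature_mul_dist_mem hρ hκ hτ).2
  rw [sum_const, nsmul_eq_mul] at hlo
  rw [← mul_sum] at hhi
  rw [le_div_iff₀ hS, div_le_iff₀ hS]
  constructor <;> nlinarith [(Nat.cast_nonneg #E : (0 : ℝ) ≤ #E)]

variable {s : ℝ}

lemma quasiNormalizedStep_ge (hs : 0 ≤ s) (hw : ∀ e ∈ E, 0 < w e)
    (hρ : ∀ e ∈ E, 0 < ρ e ∧ ρ e ≤ w e)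
    (hκ : ∀ e (he : e ∈ E), -(2 / ρ e) * E.sup' ⟨e, he⟩ w ≤ κ e ∧ κ e ≤ 2)
    {e : ι} (he : e ∈ E) :
    (1 - 2 * ((#E : ℝ) + 1) * s) * w e ≤ quasiNormalizedStep E s w ρ κ e := by
  obtain ⟨hρ0, hρw⟩ := hρ e he
  have hrate :
      -(2 * (#E : ℝ) + 2) ≤ -(κ e) + (∑ τ ∈ E, κ τ * ρ τ) / ∑ τ ∈ E, w τ := by
    linarith [(hκ e he).2, (totalCurvature_div_mem ⟨e, he⟩ hw hρ hκ).1]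
  have hsρ : s * ρ e ≤ s * w e := mul_le_mul_of_nonneg_left hρw hs
  have := mul_le_mul_of_nonneg_right hrate (mul_nonneg hs hρ0.le)
  unfold quasiNormalizedStep
  nlinarith [(Nat.cast_nonneg #E : (0 : ℝ) ≤ #E)]

lemma quasiNormalizedStep_le (hs : 0 ≤ s) (hw : ∀ e ∈ E, 0 < w e)
    (hρ : ∀ e ∈ E, 0 < ρ e ∧ ρ e ≤ w e)
    (hκ : ∀ e (he : e ∈ E), -(2 / ρ e) * E.sup' ⟨e, he⟩ w ≤ κ e ∧ κ e ≤ 2)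
    {e : ι} (he : e ∈ E) :
    quasiNormalizedStep E s w ρ κ e ≤ w e + 2 * s * (E.sup' ⟨e, he⟩ w + w e) := by
  obtain ⟨hρ0, hρw⟩ := hρ e he
  have hκρ := (curvature_mul_dist_mem hρ hκ he).1
  have hmean :=
    mul_le_mul_of_nonneg_right (totalCurvature_div_mem ⟨e, he⟩ hw hρ hκ).2 hρ0.le
  have : quasiNormalizedStep E s w ρ κ e = w e + s * (-(κ e * ρ e) +
      (∑ τ ∈ E, κ τ * ρ τ) / (∑ τ ∈ E, w τ) * ρ e) := by
    unfold quasiNormalizedStep; ring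
  rw [this]
  nlinarith

lemma sum_quasiNormalizedStep_le (hs : 0 ≤ s) (hw : ∀ e ∈ E, 0 < w e)
    (hρ : ∀ e ∈ E, 0 < ρ e ∧ ρ e ≤ w e)
    (hκ : ∀ e (he : e ∈ E), -(2 / ρ e) * E.sup' ⟨e, he⟩ w ≤ κ e ∧ κ e ≤ 2) :
    ∑ e ∈ E, quasiNormalizedStep E s w ρ κ e ≤
      (1 + 2 * ((#E : ℝ) + 1) * s) * ∑ e ∈ E, w e := by
  rcases E.eq_empty_or_nonempty with rfl | hE
  · simp
  have hMS : E.sup' hE w ≤ ∑ τ ∈ E, w τ :=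
    sup'_le hE _ fun e he => single_le_sum (fun τ hτ => (hw τ hτ).le) he
  calc ∑ e ∈ E, quasiNormalizedStep E s w ρ κ e
      ≤ ∑ e ∈ E, (w e + 2 * s * (E.sup' hE w + w e)) :=
        sum_le_sum fun e he => quasiNormalizedStep_le hs hw hρ hκ he
    _ = (1 + 2 * s) * ∑ e ∈ E, w e + 2 * s * #E * E.sup' hE w := by
        simp only [sum_add_distrib, ← mul_sum, sum_const, nsmul_eq_mul]; ring
    _ ≤ (1 + 2 * ((#E : ℝ) + 1) * s) * ∑ e ∈ E, w e := by
        nlinarith [mul_le_mul_of_nonneg_left hMS (by positivity : 0 ≤ 2 * s * #E)]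

end QuasiNormalizedStep

lemma flow_bounds_of_step_bounds {ι : Type*} (E : Finset ι) {c : ℝ} (hc0 : 0 ≤ c)
    (hc1 : c < 1) (w : ℕ → ι → ℝ) (hpos0 : ∀ e ∈ E, 0 < w 0 e)
    (hstep : ∀ j, (∀ e ∈ E, 0 < w j e) →
      (∀ e ∈ E, (1 - c) * w j e ≤ w (j + 1) e) ∧
        ∑ e ∈ E, w (j + 1) e ≤ (1 + c) * ∑ e ∈ E, w j e) :
    ∀ j, ∀ e ∈ E, 0 < w j e ∧ (1 - c) ^ j * w 0 e ≤ w j e ∧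
      w j e ≤ (1 + c) ^ j * ∑ τ ∈ E, w 0 τ := by
  have hlower : ∀ j, ∀ e ∈ E, 0 < w j e ∧ (1 - c) ^ j * w 0 e ≤ w j e := by
    intro j
    induction j with
    | zero => exact fun e he => ⟨hpos0 e he, by simp⟩
    | succ j ih =>
      intro e he
      have hj := (hstep j fun τ hτ => (ih τ hτ).1).1 e he
      have hw := ih e he
      constructor
      · nlinarith
      · calc (1 - c) ^ (j + 1) * w 0 e = (1 - c) * ((1 - c) ^ j * w 0 e) := by ring
          _ ≤ (1 - c) * w j e := by gcongr; exact hw.2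
          _ ≤ w (j + 1) e := hj
  have hsum : ∀ j, ∑ e ∈ E, w j e ≤ (1 + c) ^ j * ∑ τ ∈ E, w 0 τ := by
    intro j
    induction j with
    | zero => simp
    | succ j ih =>
      calc ∑ e ∈ E, w (j + 1) e ≤ (1 + c) * ∑ e ∈ E, w j e :=
            (hstep j fun τ hτ => (hlower j τ hτ).1).2
        _ ≤ (1 + c) * ((1 + c) ^ j * ∑ τ ∈ E, w 0 τ) := by gcongr
        _ = (1 + c) ^ (j + 1) * ∑ τ ∈ E, w 0 τ := by ring
  exact fun j e he => ⟨(hlower j e he).1, (hlower j e he).2,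
    (single_le_sum (fun τ hτ => (hlower j τ hτ).1.le) he).trans (hsum j)⟩

theorem lly_quasi_normalized_flow_bounds_general {V : Type*} [Fintype V]
    (G : SimpleGraph V) [DecidableRel G.Adj]
    (m : ℕ) (hm : G.edgeFinset.card = m)
    (s : ℝ) (hs0 : 0 < s) (hs1 : s < 1 / (2 * (m : ℝ) + 2))
    (w : ℕ → Sym2 V → ℝ) (κ : ℕ → Sym2 V → ℝ)
    (hpos0 : ∀ e ∈ G.edgeFinset, 0 < w 0 e)
    -- the curvature bounds −(2/ρ_e)·max_{τ∈E} w_τ ≤ κ_e ≤ 2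
    (hbound : ∀ (j : ℕ) (e : Sym2 V) (he : e ∈ G.edgeFinset),
      -(2 / edist G (w j) e) * G.edgeFinset.sup' ⟨e, he⟩ (w j) ≤ κ j e ∧ κ j e ≤ 2)
    (hflow : ∀ j : ℕ, ∀ e ∈ G.edgeFinset,
      w (j + 1) e = w j e +
        s * (-(κ j e) +
          (∑ τ ∈ G.edgeFinset, κ j τ * edist G (w j) τ) /
            (∑ τ ∈ G.edgeFinset, w j τ)) * edist G (w j) e) :
    ∀ j : ℕ, ∀ e ∈ G.edgeFinset,
      0 < w j e ∧
      (1 - 2 * ((m : ℝ) + 1) * s) ^ j * w 0 e ≤ w j e ∧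
      w j e ≤ (1 + 2 * ((m : ℝ) + 1) * s) ^ j * ∑ τ ∈ G.edgeFinset, w 0 τ := by
  subst hm
  have hc1 : 2 * ((#G.edgeFinset : ℝ) + 1) * s < 1 := by
    rw [lt_div_iff₀ (by positivity)] at hs1
    linarith
  refine flow_bounds_of_step_bounds _ (by positivity) hc1 w hpos0 fun j hpos => ?_
  have hρ : ∀ e ∈ G.edgeFinset, 0 < edist G (w j) e ∧ edist G (w j) e ≤ w j e :=
    fun e he => ⟨edist_pos_of_weight_pos hpos (SimpleGraph.mem_edgeFinset.mp he),
      edist_le_weight (fun τ hτ => (hpos τ (SimpleGraph.mem_edgeFinset.mpr hτ)).le)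
        (SimpleGraph.mem_edgeFinset.mp he)⟩
  refine ⟨fun e he => hflow j e he ▸ quasiNormalizedStep_ge hs0.le hpos hρ (hbound j) he, ?_⟩
  rw [sum_congr rfl (hflow j)]
  exact sum_quasiNormalizedStep_le hs0.le hpos hρ (hbound j)

/-- Theorem 2.2 (ii): bounds for the discrete quasi-normalized Ricci curvature flow with
Lin–Lu–Yau's curvature. -/
theorem lly_quasi_normalized_flow_bounds {V : Type*} [Fintype V] [DecidableEq V]
    (G : SimpleGraph V) [DecidableRel G.Adj] (hconn : G.Connected)
    (m : ℕ) (hm : G.edgeFinset.card = m)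
    (s : ℝ) (hs0 : 0 < s) (hs1 : s < 1 / (2 * (m : ℝ) + 2))
    (w : ℕ → Sym2 V → ℝ) (κ : ℕ → Sym2 V → ℝ)
    (hpos0 : ∀ e ∈ G.edgeFinset, 0 < w 0 e)
    -- the Lin–Lu–Yau curvature κ is the limit of κ^α/(1-α) as α → 1⁻, assumed to exist
    (hLLY : ∀ j : ℕ, ∀ e ∈ G.edgeFinset,
      Filter.Tendsto (fun α : ℝ => ollivier G (w j) α e / (1 - α))
        (nhdsWithin 1 (Set.Iio 1)) (nhds (κ j e)))
    -- the curvature bounds −(2/ρ_e)·max_{τ∈E} w_τ ≤ κ_e ≤ 2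
    (hbound : ∀ (j : ℕ) (e : Sym2 V) (he : e ∈ G.edgeFinset),
      -(2 / edist G (w j) e) * G.edgeFinset.sup' ⟨e, he⟩ (w j) ≤ κ j e ∧ κ j e ≤ 2)
    (hflow : ∀ j : ℕ, ∀ e ∈ G.edgeFinset,
      w (j + 1) e = w j e +
        s * (-(κ j e) +
          (∑ τ ∈ G.edgeFinset, κ j τ * edist G (w j) τ) /
            (∑ τ ∈ G.edgeFinset, w j τ)) * edist G (w j) e) :
    ∀ j : ℕ, ∀ e ∈ G.edgeFinset,
      0 < w j e ∧
      (1 - 2 * ((m : ℝ) + 1) * s) ^ j * w 0 e ≤ w j e ∧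
      w j e ≤ (1 + 2 * ((m : ℝ) + 1) * s) ^ j * ∑ τ ∈ G.edgeFinset, w 0 τ :=
  lly_quasi_normalized_flow_bounds_general G m hm s hs0 hs1 w κ hpos0 hbound hflow
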